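/- Let (W,{s,t}) be a Coxeter system of dihedral type I₂(m) with m = m_{s,t} < ∞, and let h be a pre-realization of W over an integral domain k. For k ≥ 2 define α_k ∈ h* by α_k = (tst⋯ with k−1 factors)·α_t if k is odd and α_k = (tst⋯ with k−1 factors)·α_s if k is even, where the alternating product tst⋯ starts with t and acts contragrediently on h*; also set α_1 = α_t and α_0 = −α_s. Then for all k ≥ 0, ⟨α_s∨, α_k⟩ = (−1)^{k+1} · (x(k))(a_{s,t}, a_{t,s}). -/
import Mathlib


/-!
Statement 10: in a finite dihedral Coxeter system with a pre-realization, the pairings of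
`α_s∨` with the roots `α_k` along the alternating products are given by the twisted
variables: `⟨α_s∨, α_k⟩ = (−1)^{k+1} (x(k))(a_{s,t}, a_{t,s})`.
-/

attribute [local instance] Classical.propDecidable

noncomputable section

namespace PaperStmt

/-- `ℤ[x,y]`. -/
abbrev A2 : Type := MvPolynomial (Fin 2) ℤ

/-- The variable `x`. -/
def varX : A2 := MvPolynomial.X 0

/-- The variable `y`. -/
def varY : A2 := MvPolynomial.X 1

/-- The pair of two-colored quantum numbers `([n]_x, [n]_y)` for `n ∈ ℕ`. -/
def qPair : ℕ → A2 × A2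
  | 0 => (0, 0)
  | 1 => (1, 1)
  | n + 2 =>
      (varX * (qPair (n + 1)).2 - (qPair n).1,
        varY * (qPair (n + 1)).1 - (qPair n).2)

/-- The two-colored quantum number `[n]_x`, `n ∈ ℤ` (the recursions of the paper, used in both
directions, force `[-n]_x = -[n]_x`). -/
def qX (n : ℤ) : A2 := if 0 ≤ n then (qPair n.toNat).1 else -(qPair (-n).toNat).1

/-- The two-colored quantum number `[n]_y`, `n ∈ ℤ`. -/
def qY (n : ℤ) : A2 := if 0 ≤ n then (qPair n.toNat).2 else -(qPair (-n).toNat).2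

/-- The `d`-twisted variable `x(d) = [d+1]_x − [d−1]_x`. -/
def twX (d : ℤ) : A2 := qX (d + 1) - qX (d - 1)

/-- The `d`-twisted variable `y(d) = [d+1]_y − [d−1]_y`. -/
def twY (d : ℤ) : A2 := qY (d + 1) - qY (d - 1)
/-- Substitution `x ↦ x(d), y ↦ y(d)` in `ℤ[x,y]`. -/
def twist (d : ℤ) (p : A2) : A2 := MvPolynomial.aeval ![twX d, twY d] p

/-- The two-colored quantum binomial coefficient `binom(n,j)_x`: the unique element of
`ℤ[x,y]` whose product with `[1]_x [2]_x ⋯ [j]_x` is `[n]_x [n−1]_x ⋯ [n−j+1]_x`. -/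
def qbinomX (n j : ℕ) : A2 :=
  if h : ∃ p : A2,
      p * ∏ i ∈ Finset.range j, qX ((i : ℤ) + 1) =
        ∏ i ∈ Finset.range j, qX ((n : ℤ) - (i : ℤ)) then
    h.choose
  else 0

/-- The two-colored quantum binomial coefficient `binom(n,j)_y`. -/
def qbinomY (n j : ℕ) : A2 :=
  if h : ∃ p : A2,
      p * ∏ i ∈ Finset.range j, qY ((i : ℤ) + 1) =
        ∏ i ∈ Finset.range j, qY ((n : ℤ) - (i : ℤ)) then
    h.choose
  else 0

/-- Evaluation `p(a,b)` of `p ∈ ℤ[x,y]` in a commutative ring, at `x ↦ a`, `y ↦ b`. -/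
def pev {k : Type*} [CommRing k] (a b : k) (p : A2) : k := MvPolynomial.aeval ![a, b] p
variable {B W : Type*} [Group W] {M : CoxeterMatrix B}

/-- A pre-realization of the Coxeter system `cs` over `k`: a `k`-module `V` with simple
coroots in `V` and simple roots in the dual `V* = Module.Dual k V`, such that the pairing of
each simple root with its coroot is `2`, the formula `s(v) = v − ⟨v, α_s⟩ α_s∨` defines a
representation `rep` of `W` on `V`, and each simple root is surjective onto `k`
(Demazure surjectivity). -/
structure PreRealization (cs : CoxeterSystem M W) (k V : Type*)
    [CommRing k] [AddCommGroup V] [Module k V] where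
  coroot : B → V
  root : B → Module.Dual k V
  rep : W →* Module.End k V
  root_coroot_eq_two : ∀ i : B, root i (coroot i) = 2
  rep_simple : ∀ (i : B) (v : V), rep (cs.simple i) v = v - root i v • coroot i
  root_surjective : ∀ i : B, Function.Surjective ⇑(root i)

variable {k V : Type*} [CommRing k] [AddCommGroup V] [Module k V] {cs : CoxeterSystem M W}

/-- The contragredient action of `W` on the dual `V*`. -/
def dAct (R : PreRealization cs k V) (w : W) (f : Module.Dual k V) : Module.Dual k V :=
  f.comp (R.rep w⁻¹)

/-- The canonical (Deodhar–Dyer) generating set of a subset `A ⊆ W`: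
`{t ∈ ℛ(W) : N(t) ∩ A = {t}}` where `N(x) = {r ∈ ℛ(W) : ℓ(xr) < ℓ(x)}`. -/
def canonicalGens (cs : CoxeterSystem M W) (A : Set W) : Set W :=
  {t : W | cs.IsReflection t ∧
    ({r : W | cs.IsReflection r ∧ cs.length (t * r) < cs.length t} ∩ A) = {t}}

/-- `W'` is a reflection subgroup: it is generated by the reflections it contains. -/
def IsReflectionSubgroup (cs : CoxeterSystem M W) (W' : Subgroup W) : Prop :=
  W' = Subgroup.closure ((W' : Set W) ∩ {r : W | cs.IsReflection r})

/-- A reflection datum on a subset `A ⊆ W`: maps `w_•, r_•` with `t = w_t r_t w_t⁻¹` and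
`ℓ(w_t r_t) > ℓ(w_t)` for all `t ∈ A`. -/
def IsReflectionDatum (cs : CoxeterSystem M W) (A : Set W) (wm : W → W) (rm : W → B) : Prop :=
  ∀ t ∈ A, t = wm t * cs.simple (rm t) * (wm t)⁻¹ ∧
    cs.length (wm t) < cs.length (wm t * cs.simple (rm t))

/-- The root `α_t = w_t · α_{r_t}` attached to `t` by a reflection datum. -/
def datumRoot (R : PreRealization cs k V) (wm : W → W) (rm : W → B) (t : W) :
    Module.Dual k V :=
  dAct R (wm t) (R.root (rm t))

/-- The coroot `α_t∨ = w_t · α_{r_t}∨` attached to `t` by a reflection datum. -/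
def datumCoroot (R : PreRealization cs k V) (wm : W → W) (rm : W → B) (t : W) : V :=
  R.rep (wm t) (R.coroot (rm t))

/-- The Cartan pairing `a_{t,t'} = ⟨α_t∨, α_{t'}⟩` attached to a reflection datum. -/
def cartan (R : PreRealization cs k V) (wm : W → W) (rm : W → B) (t t' : W) : k :=
  datumRoot R wm rm t' (datumCoroot R wm rm t)

/-- The Cartan entry `a_{s,t} = ⟨α_s∨, α_t⟩` for simple reflections. -/
def cartanS (R : PreRealization cs k V) (s t : B) : k := R.root t (R.coroot s)

/-- The alternating word of length `n` starting with `a`: `(a, c, a, c, …)`. -/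
def altW (a c : B) : ℕ → List B
  | 0 => []
  | n + 1 => a :: altW c a n

/-- The roots `α_k`: `α_0 = −α_s`, and for `k ≥ 1`, `α_k` is the image of `α_t` (`k` odd)
resp. `α_s` (`k` even) under the contragredient action of the alternating product
`tst⋯` with `k−1` factors starting with `t`. -/
def alphaK (R : PreRealization cs k V) (s t : B) : ℕ → Module.Dual k V
  | 0 => -(R.root s)
  | n + 1 =>
      dAct R (cs.wordProd (altW t s n)) (R.root (if (n + 1) % 2 = 1 then t else s))


/-! ### Auxiliary lemmas -/

section Aux

variable (R : PreRealization cs k V)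

lemma dAct_one (f : Module.Dual k V) : dAct R 1 f = f := by
  ext v; simp [dAct]

lemma dAct_mul (w₁ w₂ : W) (f : Module.Dual k V) :
    dAct R (w₁ * w₂) f = dAct R w₁ (dAct R w₂ f) := by
  ext v; simp [dAct, mul_inv_rev]

lemma dAct_sub (w : W) (f g : Module.Dual k V) :
    dAct R w (f - g) = dAct R w f - dAct R w g := by
  ext v; simp [dAct]

lemma dAct_smul (w : W) (c : k) (f : Module.Dual k V) :
    dAct R w (c • f) = c • dAct R w f := by
  ext v; simp [dAct]

lemma dAct_simple (i : B) (f : Module.Dual k V) :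
    dAct R (cs.simple i) f = f - f (R.coroot i) • R.root i := by
  ext v
  simp only [dAct, cs.inv_simple, LinearMap.coe_comp, Function.comp_apply, R.rep_simple,
    map_sub, map_smul, smul_eq_mul, LinearMap.sub_apply, LinearMap.smul_apply]
  ring

lemma three_term (w : W) (u v : B) :
    dAct R (w * cs.simple u * cs.simple v) (R.root u) =
      - dAct R w (R.root u) -
        R.root u (R.coroot v) • dAct R (w * cs.simple u) (R.root v) := by
  rw [dAct_mul R (w * cs.simple u), dAct_simple, dAct_sub, dAct_smul, dAct_mul R w,
    dAct_mul R w, dAct_simple, dAct_simple, R.root_coroot_eq_two, dAct_sub, dAct_smul,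
    dAct_sub, dAct_smul]
  module

lemma altW_concat (n : ℕ) : ∀ a c : B,
    altW a c (n + 1) = altW a c n ++ [if n % 2 = 0 then a else c] := by
  induction n with
  | zero => intro a c; simp [altW]
  | succ m ih =>
      intro a c
      show a :: altW c a (m + 1) = (a :: altW c a m) ++ _
      rw [ih c a]
      rcases Nat.mod_two_eq_zero_or_one m with h | h
      · have h1 : (m + 1) % 2 = 1 := by omega
        simp [h, h1]
      · have h1 : (m + 1) % 2 = 0 := by omega
        simp [h, h1]

lemma alphaK_rec (s t : B) (m : ℕ) :
    alphaK R s t (m + 3) =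
      - alphaK R s t (m + 1) -
        (if m % 2 = 0 then R.root t (R.coroot s) else R.root s (R.coroot t)) •
          alphaK R s t (m + 2) := by
  simp only [alphaK]
  rcases Nat.mod_two_eq_zero_or_one m with h | h
  · have e1 : (m + 1) % 2 = 1 := by omega
    have e2 : (m + 1 + 1) % 2 = 0 := by omega
    have e3 : (m + 2 + 1) % 2 = 1 := by omega
    have hw1 : altW t s (m + 1) = altW t s m ++ [t] := by
      rw [altW_concat]; simp [h]
    have hw2 : altW t s (m + 2) = altW t s (m + 1) ++ [s] := by
      rw [altW_concat]; simp [e1]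
    rw [if_pos e3, if_pos e1, if_neg (by omega : ¬ (m + 1 + 1) % 2 = 1), if_pos h,
      hw2, hw1, cs.wordProd_append, cs.wordProd_append, cs.wordProd_singleton,
      cs.wordProd_singleton]
    exact three_term R _ t s
  · have e1 : (m + 1) % 2 = 0 := by omega
    have e2 : (m + 1 + 1) % 2 = 1 := by omega
    have e3 : (m + 2 + 1) % 2 = 0 := by omega
    have hw1 : altW t s (m + 1) = altW t s m ++ [s] := by
      rw [altW_concat]; simp [h]
    have hw2 : altW t s (m + 2) = altW t s (m + 1) ++ [t] := by
      rw [altW_concat]; simp [e1]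
    rw [if_neg (by omega : ¬ (m + 2 + 1) % 2 = 1), if_neg (by omega : ¬ (m + 1) % 2 = 1),
      if_pos e2, if_neg (by omega : ¬ m % 2 = 0),
      hw2, hw1, cs.wordProd_append, cs.wordProd_append, cs.wordProd_singleton,
      cs.wordProd_singleton]
    exact three_term R _ s t

end Aux

/-! ### Polynomial lemmas -/

/-- Natural-number version of `twX`. -/
def tX : ℕ → A2
  | 0 => 2
  | n + 1 => (qPair (n + 2)).1 - (qPair n).1

/-- Natural-number version of `twY`. -/
def tY : ℕ → A2
  | 0 => 2
  | n + 1 => (qPair (n + 2)).2 - (qPair n).2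

lemma qX_natCast (n : ℕ) : qX (n : ℤ) = (qPair n).1 := by
  simp [qX]

lemma twX_natCast (n : ℕ) : twX (n : ℤ) = tX n := by
  cases n with
  | zero =>
      show qX 1 - qX (-1) = tX 0
      simp [qX, qPair, tX]
      norm_num
  | succ m =>
      have h1 : ((m + 1 : ℕ) : ℤ) + 1 = ((m + 2 : ℕ) : ℤ) := by push_cast; ring
      have h2 : ((m + 1 : ℕ) : ℤ) - 1 = ((m : ℕ) : ℤ) := by push_cast; ring
      show qX _ - qX _ = _
      rw [h1, h2, qX_natCast, qX_natCast]
      rfl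

lemma tX_rec (n : ℕ) : tX (n + 2) = varX * tY (n + 1) - tX n := by
  cases n with
  | zero =>
      show (qPair 3).1 - (qPair 1).1 = varX * ((qPair 2).2 - (qPair 0).2) - 2
      simp [qPair]
      ring
  | succ m =>
      have h4 : (qPair (m + 4)).1 = varX * (qPair (m + 3)).2 - (qPair (m + 2)).1 := rfl
      have h2 : (qPair (m + 2)).1 = varX * (qPair (m + 1)).2 - (qPair m).1 := rfl
      show (qPair (m + 4)).1 - (qPair (m + 2)).1 =
        varX * ((qPair (m + 3)).2 - (qPair (m + 1)).2) - ((qPair (m + 2)).1 - (qPair m).1)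
      rw [h4, h2]
      ring

lemma tY_rec (n : ℕ) : tY (n + 2) = varY * tX (n + 1) - tY n := by
  cases n with
  | zero =>
      show (qPair 3).2 - (qPair 1).2 = varY * ((qPair 2).1 - (qPair 0).1) - 2
      simp [qPair]
      ring
  | succ m =>
      have h4 : (qPair (m + 4)).2 = varY * (qPair (m + 3)).1 - (qPair (m + 2)).2 := rfl
      have h2 : (qPair (m + 2)).2 = varY * (qPair (m + 1)).1 - (qPair m).2 := rfl
      show (qPair (m + 4)).2 - (qPair (m + 2)).2 =
        varY * ((qPair (m + 3)).1 - (qPair (m + 1)).1) - ((qPair (m + 2)).2 - (qPair m).2)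
      rw [h4, h2]
      ring

lemma tXY_parity : ∀ m : ℕ,
    tX (2 * m) = tY (2 * m) ∧ varX * tY (2 * m + 1) = varY * tX (2 * m + 1) := by
  intro m
  induction m with
  | zero =>
      constructor
      · rfl
      · show varX * ((qPair 2).2 - (qPair 0).2) = varY * ((qPair 2).1 - (qPair 0).1)
        simp [qPair]
        ring
  | succ p ih =>
      have h1 : 2 * (p + 1) = 2 * p + 2 := by ring
      have hE : tX (2 * p + 2) = tY (2 * p + 2) := by
        rw [tX_rec, tY_rec, ih.2, ih.1]
      constructor
      · rw [h1]; exact hE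
      · rw [h1]
        have h3 : 2 * p + 2 + 1 = (2 * p + 1) + 2 := by ring
        rw [h3, tX_rec, tY_rec, mul_sub, mul_sub, ← mul_assoc, ← mul_assoc,
          mul_comm varX varY, hE, ih.2]

lemma pev_tX_rec3 {k : Type*} [CommRing k] (a b : k) (n : ℕ) :
    pev a b (tX (n + 3)) =
      (if n % 2 = 0 then a else b) * pev a b (tX (n + 2)) - pev a b (tX (n + 1)) := by
  have hx : MvPolynomial.aeval ![a, b] varX = a := by
    simp [varX]
  have hy : MvPolynomial.aeval ![a, b] varY = b := by
    simp [varY]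
  have hrec : tX (n + 3) = varX * tY (n + 2) - tX (n + 1) := tX_rec (n + 1)
  rcases Nat.mod_two_eq_zero_or_one n with h | h
  · obtain ⟨p, hp⟩ : ∃ p, n + 2 = 2 * p := ⟨(n + 2) / 2, by omega⟩
    have hE : tY (n + 2) = tX (n + 2) := by rw [hp]; exact (tXY_parity p).1.symm
    rw [if_pos h, hrec, hE]
    simp only [pev, map_sub, map_mul, hx]
  · obtain ⟨p, hp⟩ : ∃ p, n + 2 = 2 * p + 1 := ⟨(n + 1) / 2, by omega⟩
    have hE : varX * tY (n + 2) = varY * tX (n + 2) := by rw [hp]; exact (tXY_parity p).2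
    rw [if_neg (by omega), hrec, hE]
    simp only [pev, map_sub, map_mul, hy]

theorem statement_10 [IsDomain k] [Module.Free k V] [Module.Finite k V]
    (cs : CoxeterSystem M W) (s t : B) (hst : s ≠ t)
    (hdih : ∀ i : B, i = s ∨ i = t)
    (hm : orderOf (cs.simple s * cs.simple t) ≠ 0)
    (R : PreRealization cs k V) (n : ℕ) :
    alphaK R s t n (R.coroot s) =
      (-1 : k) ^ (n + 1) *
        pev (R.root t (R.coroot s)) (R.root s (R.coroot t)) (twX (n : ℤ)) := by
  have key : ∀ m : ℕ, alphaK R s t m (R.coroot s) =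
      (-1 : k) ^ (m + 1) *
        pev (R.root t (R.coroot s)) (R.root s (R.coroot t)) (tX m) := by
    intro m
    induction m using Nat.strong_induction_on with
    | _ m ih =>
      match m with
      | 0 =>
          show (-(R.root s)) (R.coroot s) = _
          have h2 : pev (R.root t (R.coroot s)) (R.root s (R.coroot t)) (tX 0) = 2 := by
            show pev _ _ (2 : A2) = 2
            simp [pev]
          rw [h2, LinearMap.neg_apply, R.root_coroot_eq_two]
          norm_num
      | 1 =>
          show dAct R (cs.wordProd (altW t s 0)) (R.root (if 1 % 2 = 1 then t else s))
              (R.coroot s) = _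
          have h2 : pev (R.root t (R.coroot s)) (R.root s (R.coroot t)) (tX 1)
              = R.root t (R.coroot s) := by
            show pev _ _ ((qPair 2).1 - (qPair 0).1) = _
            simp [pev, qPair, varX]
          rw [h2]
          show dAct R (cs.wordProd []) (R.root t) (R.coroot s) = _
          rw [cs.wordProd_nil, dAct_one]
          ring
      | 2 =>
          show dAct R (cs.wordProd (altW t s 1)) (R.root (if 2 % 2 = 1 then t else s))
              (R.coroot s) = _
          have h2 : pev (R.root t (R.coroot s)) (R.root s (R.coroot t)) (tX 2)
              = R.root t (R.coroot s) * R.root s (R.coroot t) - 2 := by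
            show pev _ _ ((qPair 3).1 - (qPair 1).1) = _
            simp [pev, qPair, varX, varY]
            ring
          rw [h2]
          show dAct R (cs.wordProd [t]) (R.root s) (R.coroot s) = _
          rw [cs.wordProd_singleton, dAct_simple, LinearMap.sub_apply, LinearMap.smul_apply,
            R.root_coroot_eq_two]
          simp only [smul_eq_mul]
          ring
      | (p + 3) =>
          have h1 := ih (p + 1) (by omega)
          have h2 := ih (p + 2) (by omega)
          have hr := congrArg (fun f : Module.Dual k V => f (R.coroot s)) (alphaK_rec R s t p)
          simp only [LinearMap.sub_apply, LinearMap.neg_apply, LinearMap.smul_apply,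
            smul_eq_mul] at hr
          rw [hr, h1, h2, pev_tX_rec3]
          generalize (if p % 2 = 0 then R.root t (R.coroot s) else R.root s (R.coroot t)) = c
          ring
  rw [key n, twX_natCast]


end PaperStmt
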